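/- Let e ≥ 1 and a,b ∈ ℕ with 0 ≤ a ≤ q-1 and b - ea ≥ 0. If q-1 ≤ b - ea, then the code C_{A,e}(a,b) ⊆ F_q^{q^2} has minimum distance q - a. -/

import Mathlib

noncomputable def dualCode (F : Type*) [Field F] {ι : Type*} [Fintype ι]
    (C : Submodule F (ι → F)) : Submodule F (ι → F) where
  carrier := {x | ∀ c ∈ C, ∑ i, x i * c i = 0}
  zero_mem' := by intro c _; simp
  add_mem' := by
    intro x y hx hy c hc
    simp only [Pi.add_apply, add_mul, Finset.sum_add_distrib]
    rw [hx c hc, hy c hc, add_zero]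
  smul_mem' := by
    intro a x hx c hc
    simp only [Pi.smul_apply, smul_eq_mul, mul_assoc, ← Finset.mul_sum]
    rw [hx c hc, mul_zero]

noncomputable def minDist (F : Type*) [Field F] {ι : Type*} [Fintype ι] [DecidableEq F]
    (C : Submodule F (ι → F)) : ℕ :=
  sInf {w | ∃ c ∈ C, c ≠ 0 ∧ hammingNorm c = w}

/-- The weight of a matrix codeword: the number of nonzero entries. -/
noncomputable def wt2 {F : Type*} [Zero F] [DecidableEq F] {ι₁ ι₂ : Type*} [Fintype ι₁]
    [Fintype ι₂] (m : ι₂ → ι₁ → F) : ℕ :=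
  hammingNorm (fun p : ι₂ × ι₁ => m p.1 p.2)

noncomputable def minDist2 (F : Type*) [Field F] [DecidableEq F] {ι₁ ι₂ : Type*} [Fintype ι₁]
    [Fintype ι₂] (C : Submodule F (ι₂ → ι₁ → F)) : ℕ :=
  sInf {w | ∃ m ∈ C, m ≠ 0 ∧ wt2 m = w}

noncomputable def dualCode2 (F : Type*) [Field F] {ι₁ ι₂ : Type*} [Fintype ι₁] [Fintype ι₂]
    (C : Submodule F (ι₂ → ι₁ → F)) : Submodule F (ι₂ → ι₁ → F) where
  carrier := {x | ∀ c ∈ C, ∑ i, ∑ j, x i j * c i j = 0}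
  zero_mem' := by intro c _; simp
  add_mem' := by
    intro x y hx hy c hc
    simp only [Pi.add_apply, add_mul, Finset.sum_add_distrib]
    rw [hx c hc, hy c hc, add_zero]
  smul_mem' := by
    intro a x hx c hc
    simp only [Pi.smul_apply, smul_eq_mul, mul_assoc, ← Finset.mul_sum]
    rw [hx c hc, mul_zero]

/-- The affine Reed–Solomon code `RS_q(k)`: evaluations of polynomials of degree `< k` at
all elements of `F`.  By convention it is `{0}` for `k ≤ 0` and the full space for `k ≥ q`. -/
noncomputable def RS (F : Type*) [Field F] (k : ℤ) : Submodule F (F → F) :=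
  (Polynomial.degreeLT F k.toNat).map
    (LinearMap.pi fun α : F => (Polynomial.aeval α).toLinearMap)

/-- The linear map `c ↦ v ⊗ c`, sending a word `c` to the matrix `(v i * c j)_{i,j}`. -/
noncomputable def vTensor (F : Type*) [Field F] {ι₁ ι₂ : Type*} (v : ι₁ → F) :
    (ι₂ → F) →ₗ[F] (ι₁ → ι₂ → F) where
  toFun c := fun i j => v i * c j
  map_add' c d := by funext i j; simp [mul_add]
  map_smul' a c := by funext i j; simp only [Pi.smul_apply, smul_eq_mul, RingHom.id_apply]; ring

/-- The code `C_{𝔸,e}(a,b) = Σ_{d=0}^{a} ⟨(α^d)_α⟩ ⊗ RS_q(b - ed + 1) ⊆ F^{q²}`,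
the evaluation code on the affine chart of the Hirzebruch surface `H_e`.  A codeword is a
matrix indexed by `F × F`, the entry at `(α, β)` being `α^d · f(β)`. -/
noncomputable def CA (F : Type*) [Field F] (e a b : ℕ) : Submodule F (F → F → F) :=
  ⨆ d ∈ Finset.Iic a, (RS F ((b : ℤ) - e * d + 1)).map (vTensor F fun α : F => α ^ d)

/-!
When `b - e a ≥ q - 1`, every summand `RS_q(b - e d + 1)` with `d ≤ a` is all of `F^q`, so
`C_{𝔸,e}(a,b) = RS_q(a + 1) ⊗ F^q`: the matrices `m` whose columns `α ↦ m α β` are evaluations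
of polynomials of degree `≤ a`. Tensoring with the full space `F^q` does not change the minimum
distance (a nonzero matrix has a nonzero column, and a codeword of `RS_q(a + 1)` padded by zero
columns is a matrix of the same weight), and `RS_q(a + 1)` has minimum distance `q - a`: a nonzero
polynomial of degree `≤ a` has at most `a` roots, and `∏_{c ∈ S} (X - c)` with `|S| = a` has
exactly `a`.
-/

open Polynomial Finset

lemma Nat.sInf_eq_of_subset_of_forall_exists_le {S T : Set ℕ} (hST : S ⊆ T)
    (hTS : ∀ t ∈ T, ∃ s ∈ S, s ≤ t) : sInf S = sInf T := by
  rcases T.eq_empty_or_nonempty with rfl | hT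
  · rw [Set.subset_empty_iff.mp hST]
  obtain ⟨s, hs, hs_le⟩ := hTS _ (Nat.sInf_mem hT)
  exact le_antisymm ((Nat.sInf_le hs).trans hs_le) (csInf_le_csInf' ⟨s, hs⟩ hST)

section ColumnCode

variable {F : Type*} [Field F] {ι κ : Type*}

/-- The tensor product `C ⊗ F^κ`. -/
def columnCode (C : Submodule F (ι → F)) (κ : Type*) : Submodule F (ι → κ → F) where
  carrier := {m | ∀ j, (fun i => m i j) ∈ C}
  zero_mem' _ := C.zero_mem
  add_mem' hm hn j := C.add_mem (hm j) (hn j)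
  smul_mem' c _ hm j := C.smul_mem c (hm j)

variable [Fintype ι] [Fintype κ] [DecidableEq F]

lemma wt2_eq_sum_hammingNorm (m : ι → κ → F) :
    wt2 m = ∑ j, hammingNorm (fun i => m i j) := by
  simp only [wt2, hammingNorm, card_filter]
  exact Fintype.sum_prod_type_right _

lemma minDist2_columnCode [Nonempty κ] (C : Submodule F (ι → F)) :
    minDist2 F (columnCode C κ) = minDist F C := by
  classical
  refine (Nat.sInf_eq_of_subset_of_forall_exists_le ?_ ?_).symm
  · rintro _ ⟨c, hc, hc0, rfl⟩
    obtain ⟨j₀⟩ := ‹Nonempty κ›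
    refine ⟨fun i j => if j = j₀ then c i else 0, fun j => ?_, ?_, ?_⟩
    · by_cases hj : j = j₀
      · simpa [hj] using hc
      · simp only [hj, if_false]
        exact C.zero_mem
    · exact fun h => hc0 (funext fun i => by simpa using congrFun (congrFun h i) j₀)
    · rw [wt2_eq_sum_hammingNorm,
        sum_eq_single j₀ (fun j _ hj => by simp [hj, hammingNorm]) (by simp)]
      simp
  · rintro _ ⟨m, hm, hm0, rfl⟩
    obtain ⟨i, j, hij⟩ : ∃ i j, m i j ≠ 0 := by
      by_contra! h
      exact hm0 (funext fun i => funext (h i))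
    refine ⟨_, ⟨_, hm j, fun h => hij (congrFun h i), rfl⟩, ?_⟩
    rw [wt2_eq_sum_hammingNorm]
    exact single_le_sum (f := fun j => hammingNorm fun i => m i j) (fun _ _ => Nat.zero_le _)
      (mem_univ j)

end ColumnCode

section ReedSolomon

variable {F : Type*} [Field F]

lemma mem_RS_natCast_add_one_iff {a : ℕ} {x : F → F} :
    x ∈ RS F ((a : ℤ) + 1) ↔ ∃ p : F[X], p.natDegree ≤ a ∧ ∀ α, p.eval α = x α := by
  rw [RS, show ((a : ℤ) + 1).toNat = a + 1 by omega, degreeLT_succ_eq_degreeLE]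
  simp [mem_degreeLE, natDegree_le_iff_degree_le, funext_iff, aeval_def]

variable [Fintype F]

lemma RS_eq_top {k : ℤ} (hk : (Fintype.card F : ℤ) ≤ k) : RS F k = ⊤ := by
  classical
  have hinj : Set.InjOn (id : F → F) ↑(univ : Finset F) := Function.injective_id.injOn
  refine eq_top_iff.mpr fun x _ => ⟨Lagrange.interpolate univ id x, ?_, ?_⟩
  · rw [SetLike.mem_coe, mem_degreeLT]
    refine (Lagrange.degree_interpolate_lt _ hinj).trans_le ?_
    exact_mod_cast (show Fintype.card F ≤ k.toNat by omega)
  · funext α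
    exact Lagrange.eval_interpolate_at_node x hinj (mem_univ α)

variable [DecidableEq F]

lemma card_sub_le_hammingNorm_of_mem_RS {a : ℕ} {x : F → F} (hx : x ∈ RS F ((a : ℤ) + 1))
    (hx0 : x ≠ 0) : Fintype.card F - a ≤ hammingNorm x := by
  obtain ⟨p, hpa, hpx⟩ := mem_RS_natCast_add_one_iff.mp hx
  have hp0 : p ≠ 0 := by
    rintro rfl
    exact hx0 (funext fun α => by simp [← hpx α])
  have hzeros : #{α | x α = 0} ≤ a := by
    refine le_trans (card_le_degree_of_subset_roots fun α hα => ?_) hpa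
    rw [mem_roots hp0, IsRoot, hpx α]
    exact (mem_filter.mp hα).2
  have hsplit := card_filter_add_card_filter_not (s := univ) (fun α => x α ≠ 0)
  simp only [not_not, card_univ] at hsplit
  rw [hammingNorm]
  omega

lemma exists_mem_RS_hammingNorm_eq {a : ℕ} (ha : a ≤ Fintype.card F) :
    ∃ x ∈ RS F ((a : ℤ) + 1), hammingNorm x = Fintype.card F - a := by
  obtain ⟨S, -, hS⟩ := exists_subset_card_eq (s := (univ : Finset F)) (by simpa using ha)
  refine ⟨fun α => ∏ c ∈ S, (α - c), mem_RS_natCast_add_one_iff.mpr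
    ⟨∏ c ∈ S, (X - C c), ?_, fun α => by simp [eval_prod]⟩, ?_⟩
  · rw [natDegree_prod_of_monic _ _ fun c _ => monic_X_sub_C c]
    simp [hS]
  · have : ({α | ∏ c ∈ S, (α - c) ≠ 0} : Finset F) = Sᶜ := by
      ext α
      simp [prod_eq_zero_iff, sub_eq_zero]
    rw [hammingNorm, this, card_compl, hS]

lemma minDist_RS {a : ℕ} (ha : a < Fintype.card F) :
    minDist F (RS F ((a : ℤ) + 1)) = Fintype.card F - a := by
  obtain ⟨x, hx, hwt⟩ := exists_mem_RS_hammingNorm_eq (F := F) ha.le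
  have hx0 : x ≠ 0 := hammingNorm_pos_iff.mp (by omega)
  refine le_antisymm (Nat.sInf_le ⟨x, hx, hx0, hwt⟩) (le_csInf ⟨_, x, hx, hx0, hwt⟩ ?_)
  rintro _ ⟨y, hy, hy0, rfl⟩
  exact card_sub_le_hammingNorm_of_mem_RS hy hy0

end ReedSolomon

section HirzebruchCode

variable {F : Type*} [Field F]

lemma CA_le_columnCode (e a b : ℕ) : CA F e a b ≤ columnCode (RS F ((a : ℤ) + 1)) F := by
  refine iSup₂_le fun d hd => ?_
  rintro _ ⟨c, -, rfl⟩ β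
  refine mem_RS_natCast_add_one_iff.mpr ⟨C (c β) * X ^ d, ?_, fun α => ?_⟩
  · exact (natDegree_C_mul_X_pow_le _ d).trans (mem_Iic.mp hd)
  · rw [eval_mul, eval_C, eval_pow, eval_X]
    exact mul_comm _ _

lemma mem_CA_of_le {e a b d : ℕ} (hd : d ≤ a) {c : F → F}
    (hc : c ∈ RS F ((b : ℤ) - e * d + 1)) :
    vTensor F (fun α : F => α ^ d) c ∈ CA F e a b :=
  le_iSup₂ (f := fun d (_ : d ∈ Iic a) =>
    (RS F ((b : ℤ) - e * d + 1)).map (vTensor F fun α : F => α ^ d)) d (mem_Iic.mpr hd)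
    (Submodule.mem_map_of_mem hc)

lemma columnCode_le_CA [Fintype F] {e a b : ℕ} (h : (Fintype.card F : ℤ) ≤ b - e * a + 1) :
    columnCode (RS F ((a : ℤ) + 1)) F ≤ CA F e a b := by
  intro m hm
  choose p hpa hpm using fun β => mem_RS_natCast_add_one_iff.mp (hm β)
  have hm_eq : m = ∑ d ∈ range (a + 1),
      vTensor F (fun α : F => α ^ d) (fun β => (p β).coeff d) := by
    funext α β
    rw [← hpm β α, eval_eq_sum_range' (Nat.lt_succ_of_le (hpa β))]
    simp only [Finset.sum_apply, vTensor, LinearMap.coe_mk, AddHom.coe_mk]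
    exact sum_congr rfl fun d _ => mul_comm _ _
  rw [hm_eq]
  refine Submodule.sum_mem _ fun d hd => ?_
  have hda : d ≤ a := Nat.lt_succ_iff.mp (mem_range.mp hd)
  have hed : e * d ≤ e * a := Nat.mul_le_mul_left e hda
  refine mem_CA_of_le hda ?_
  rw [RS_eq_top (by omega)]
  exact Submodule.mem_top

lemma CA_eq_columnCode [Fintype F] {e a b : ℕ} (h : (Fintype.card F : ℤ) ≤ b - e * a + 1) :
    CA F e a b = columnCode (RS F ((a : ℤ) + 1)) F :=
  le_antisymm (CA_le_columnCode e a b) (columnCode_le_CA h)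

end HirzebruchCode

theorem CA_minDist_high_general (F : Type*) [Field F] [Fintype F] [DecidableEq F] (q e a b : ℕ)
    (hq : Fintype.card F = q) (ha : a ≤ q - 1) (hb : e * a ≤ b)
    (hbq : q - 1 ≤ b - e * a) :
    minDist2 F (CA F e a b) = q - a := by
  have hq_pos : 0 < q := hq ▸ Fintype.card_pos
  have hfull : (Fintype.card F : ℤ) ≤ b - e * a + 1 := by omega
  rw [CA_eq_columnCode hfull, minDist2_columnCode, minDist_RS (by omega), hq]

/-- for `e ≥ 1`, `0 ≤ a ≤ q-1`, `b - ea ≥ 0` and `q - 1 ≤ b - ea`, the code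
`C_{𝔸,e}(a,b) ⊆ F^{q²}` has minimum distance `q - a`. -/
theorem CA_minDist_high (F : Type*) [Field F] [Fintype F] [DecidableEq F] (q e a b : ℕ)
    (hq : Fintype.card F = q) (he : 1 ≤ e) (ha : a ≤ q - 1) (hb : e * a ≤ b)
    (hbq : q - 1 ≤ b - e * a) :
    minDist2 F (CA F e a b) = q - a :=
  CA_minDist_high_general F q e a b hq ha hb hbq
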